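/- arXiv:math/9804161 — 3 statements merged into one kernel-verified Lean document; each statement's English description precedes it below -/
import Mathlib

section
/- Let U : ℝ² → ℝ be smooth with U_X ≠ 0 and U_{YY} ≠ 0 on a domain, and suppose the contact transformation x = U_Y, y = U - Y·U_Y, u = X implicitly defines u as a smooth function of (x,y). Then the first partial derivatives satisfy u_x = Y/U_X and u_y = 1/U_X. -/
noncomputable def px (f : ℝ × ℝ → ℝ) (p : ℝ × ℝ) : ℝ := fderiv ℝ f p (1, 0)
noncomputable def py (f : ℝ × ℝ → ℝ) (p : ℝ × ℝ) : ℝ := fderiv ℝ f p (0, 1)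

/-- under the contact transformation x = U_Y, y = U - Y·U_Y, u = X,
    the first derivatives satisfy u_x = Y/U_X, u_y = 1/U_X. -/
theorem stmt0 (U u : ℝ × ℝ → ℝ) (hU : ContDiff ℝ (⊤ : ℕ∞) U) (hu : ContDiff ℝ (⊤ : ℕ∞) u)
    (hUX : ∀ p : ℝ × ℝ, px U p ≠ 0) (hUYY : ∀ p : ℝ × ℝ, py (py U) p ≠ 0)
    (himpl : ∀ X Y : ℝ, u (py U (X, Y), U (X, Y) - Y * py U (X, Y)) = X) :
    ∀ X Y : ℝ,
      px u (py U (X, Y), U (X, Y) - Y * py U (X, Y)) = Y / px U (X, Y) ∧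
      py u (py U (X, Y), U (X, Y) - Y * py U (X, Y)) = 1 / px U (X, Y) := by
  intro X Y
  set p : ℝ × ℝ := (X, Y) with hp
  set g : ℝ × ℝ → ℝ × ℝ := fun q => (py U q, U q - q.2 * py U q) with hgdef
  have hpyU : ContDiff ℝ (⊤ : ℕ∞) (py U) := by
    have : ContDiff ℝ (⊤ : ℕ∞) (fderiv ℝ U) := hU.fderiv_right (by simp)
    exact this.clm_apply contDiff_const
  have hUd : Differentiable ℝ U := hU.differentiable (by simp)
  have hpyUd : Differentiable ℝ (py U) := hpyU.differentiable (by simp)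
  have hud : Differentiable ℝ u := hu.differentiable (by simp)
  -- derivative of g at p
  set A : (ℝ × ℝ) →L[ℝ] ℝ := fderiv ℝ (py U) p with hA
  set U' : (ℝ × ℝ) →L[ℝ] ℝ := fderiv ℝ U p with hU'
  have hAd : HasFDerivAt (py U) A p := (hpyUd p).hasFDerivAt
  have hsnd : HasFDerivAt (fun q : ℝ × ℝ => q.2)
      (ContinuousLinearMap.snd ℝ ℝ ℝ) p := hasFDerivAt_snd
  have h2 : HasFDerivAt (fun q : ℝ × ℝ => U q - q.2 * py U q)
      (U' - (p.2 • A + py U p • ContinuousLinearMap.snd ℝ ℝ ℝ)) p :=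
    (hUd p).hasFDerivAt.sub (hsnd.mul hAd)
  set G' : (ℝ × ℝ) →L[ℝ] (ℝ × ℝ) :=
    A.prod (U' - (p.2 • A + py U p • ContinuousLinearMap.snd ℝ ℝ ℝ)) with hG'
  have hgD : HasFDerivAt g G' p := HasFDerivAt.prodMk hAd h2
  have hcomp : (fun q : ℝ × ℝ => u (g q)) = (fun q : ℝ × ℝ => q.1) := by
    funext q
    exact himpl q.1 q.2
  have hchain : HasFDerivAt (fun q : ℝ × ℝ => u (g q))
      ((fderiv ℝ u (g p)).comp G') p :=
    (hud (g p)).hasFDerivAt.comp p hgD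
  have hfst : HasFDerivAt (fun q : ℝ × ℝ => q.1)
      (ContinuousLinearMap.fst ℝ ℝ ℝ) p := hasFDerivAt_fst
  have huniq : (fderiv ℝ u (g p)).comp G' = ContinuousLinearMap.fst ℝ ℝ ℝ := by
    have := hchain
    rw [hcomp] at this
    exact this.unique hfst
  set q0 : ℝ × ℝ := g p with hq0
  have expand : ∀ s t : ℝ, fderiv ℝ u q0 (s, t) = s * px u q0 + t * py u q0 := by
    intro s t
    have hst : ((s, t) : ℝ × ℝ) = s • ((1 : ℝ), (0 : ℝ)) + t • ((0 : ℝ), (1 : ℝ)) := by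
      simp [Prod.ext_iff]
    rw [hst, map_add, map_smul, map_smul]
    simp [px, py, smul_eq_mul]
  have eval1 : G' ((1 : ℝ), (0 : ℝ)) = (A (1, 0), U' (1, 0) - p.2 * A (1, 0)) := by
    simp [hG', ContinuousLinearMap.sub_apply, ContinuousLinearMap.add_apply,
      ContinuousLinearMap.smul_apply, smul_eq_mul]
  have eval2 : G' ((0 : ℝ), (1 : ℝ)) = (A (0, 1), U' (0, 1) - (p.2 * A (0, 1) + py U p)) := by
    simp [hG', ContinuousLinearMap.sub_apply, ContinuousLinearMap.add_apply,
      ContinuousLinearMap.smul_apply, smul_eq_mul]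
  have eq1 : fderiv ℝ u q0 (G' (1, 0)) = 1 := by
    have := congrArg (fun L : (ℝ × ℝ) →L[ℝ] ℝ => L ((1 : ℝ), (0 : ℝ))) huniq
    simpa using this
  have eq2 : fderiv ℝ u q0 (G' (0, 1)) = 0 := by
    have := congrArg (fun L : (ℝ × ℝ) →L[ℝ] ℝ => L ((0 : ℝ), (1 : ℝ))) huniq
    simpa using this
  rw [eval1] at eq1
  rw [eval2] at eq2
  rw [expand] at eq1 eq2
  -- identify pieces
  have hB : A (0, 1) = py (py U) p := rfl
  have hX1 : U' (1, 0) = px U p := rfl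
  have hY : p.2 = Y := rfl
  set a := px u q0 with ha
  set b := py u q0 with hb
  have hBne := hUYY p
  rw [hB, hY] at eq2
  rw [hX1, hY] at eq1
  -- from eq2: B * a + (-Y*B) * b ... but U'(0,1) = py U p
  have hUY : U' (0, 1) = py U p := rfl
  rw [hUY] at eq2
  have eq2' : py (py U) p * (a - Y * b) = 0 := by linarith [eq2]
  have hab : a = Y * b := by
    rcases mul_eq_zero.mp eq2' with h | h
    · exact absurd h hBne
    · linarith
  have hbX : b * px U p = 1 := by
    rw [hab] at eq1
    linear_combination eq1
  have hXne := hUX p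
  constructor
  · show a = Y / px U p
    rw [hab, eq_div_iff hXne]
    linear_combination Y * hbX
  · show b = 1 / px U p
    rw [eq_div_iff hXne]
    exact hbX
end

section
/- Let f : ℝ² → ℝ and suppose U (smooth, with U_X ≠ 0, U_{YY} ≠ 0) satisfies the linear equation U_{XX} + f(X, Y)·U_{YY} = 0. Then the function u implicitly defined by the contact transformation x = U_Y, y = U - Y·U_Y, u = X satisfies the Monge–Ampère equation u_{xx}u_{yy} - u_{xy}² = u_y⁴ · f(u, u_x/u_y). -/
lemma clm_eval (L : ℝ × ℝ →L[ℝ] ℝ) (a b : ℝ) : L (a, b) = a * L (1,0) + b * L (0,1) := by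
  have h : (a, b) = a • ((1:ℝ),(0:ℝ)) + b • ((0:ℝ),(1:ℝ)) := by simp
  rw [h, map_add, map_smul, map_smul]; simp

lemma contDiff_dapply {g : ℝ × ℝ → ℝ} (hg : ContDiff ℝ (⊤ : ℕ∞) g) (v : ℝ × ℝ) :
    ContDiff ℝ (⊤ : ℕ∞) (fun p => fderiv ℝ g p v) :=
  (hg.fderiv_right (by exact_mod_cast le_top)).clm_apply contDiff_const

lemma fderiv_dapply {g : ℝ × ℝ → ℝ} (hg : ContDiff ℝ (⊤ : ℕ∞) g) (v w p : ℝ × ℝ) :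
    fderiv ℝ (fun q => fderiv ℝ g q v) p w = fderiv ℝ (fderiv ℝ g) p w v := by
  rw [fderiv_clm_apply (((hg.fderiv_right (m := (⊤ : ℕ∞)) (by exact_mod_cast le_top)).differentiable
      (by simp)) p) (differentiableAt_const v)]
  simp

lemma sym_snd {g : ℝ × ℝ → ℝ} (hg : ContDiff ℝ (⊤ : ℕ∞) g) (p v w : ℝ × ℝ) :
    fderiv ℝ (fun q => fderiv ℝ g q v) p w = fderiv ℝ (fun q => fderiv ℝ g q w) p v := by
  rw [fderiv_dapply hg, fderiv_dapply hg]
  exact second_derivative_symmetric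
    (fun y => (hg.differentiable (by simp) y).hasFDerivAt)
    (((hg.fderiv_right (m := (⊤ : ℕ∞)) (by exact_mod_cast le_top)).differentiable
      (by simp) p).hasFDerivAt) w v

/-- if U solves the linear equation U_{XX} + f(X,Y)·U_{YY} = 0, then u
    implicitly defined by the contact transformation solves
    u_{xx}u_{yy} - u_{xy}² = u_y⁴ · f(u, u_x/u_y). -/
theorem stmt3 (f : ℝ × ℝ → ℝ) (U u : ℝ × ℝ → ℝ)
    (hU : ContDiff ℝ (⊤ : ℕ∞) U) (hu : ContDiff ℝ (⊤ : ℕ∞) u)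
    (hUX : ∀ p : ℝ × ℝ, px U p ≠ 0) (hUYY : ∀ p : ℝ × ℝ, py (py U) p ≠ 0)
    (hlin : ∀ p : ℝ × ℝ, px (px U) p + f p * py (py U) p = 0)
    (himpl : ∀ X Y : ℝ, u (py U (X, Y), U (X, Y) - Y * py U (X, Y)) = X) :
    ∀ X Y : ℝ,
      px (px u) (py U (X, Y), U (X, Y) - Y * py U (X, Y)) *
          py (py u) (py U (X, Y), U (X, Y) - Y * py U (X, Y)) -
        px (py u) (py U (X, Y), U (X, Y) - Y * py U (X, Y)) ^ 2 =
      py u (py U (X, Y), U (X, Y) - Y * py U (X, Y)) ^ 4 *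
        f (u (py U (X, Y), U (X, Y) - Y * py U (X, Y)),
           px u (py U (X, Y), U (X, Y) - Y * py U (X, Y)) /
             py u (py U (X, Y), U (X, Y) - Y * py U (X, Y))) := by
  have hudiff : Differentiable ℝ u := hu.differentiable (by simp)
  have hWs : ContDiff ℝ (⊤ : ℕ∞) (py U) := contDiff_dapply hU (0,1)
  have hWdiff : Differentiable ℝ (py U) := hWs.differentiable (by simp)
  have hUdiff : Differentiable ℝ U := hU.differentiable (by simp)
  set φ : ℝ × ℝ → ℝ × ℝ := fun p => (py U p, U p - p.2 * py U p) with hφdef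
  set φ' : (ℝ × ℝ) → (ℝ × ℝ →L[ℝ] ℝ × ℝ) := fun p =>
    (fderiv ℝ (py U) p).prod
      (fderiv ℝ U p - (p.2 • fderiv ℝ (py U) p + py U p • ContinuousLinearMap.snd ℝ ℝ ℝ)) with hφ'def
  have hφ' : ∀ p, HasFDerivAt φ (φ' p) p := fun p =>
    ((hWdiff p).hasFDerivAt).prodMk
      (((hUdiff p).hasFDerivAt).sub ((hasFDerivAt_snd).mul ((hWdiff p).hasFDerivAt)))
  have hφv1 : ∀ p : ℝ × ℝ, φ' p (1,0) = (px (py U) p, px U p - p.2 * px (py U) p) := by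
    intro p
    simp [hφ'def, px, py, ContinuousLinearMap.prod_apply, ContinuousLinearMap.sub_apply,
      ContinuousLinearMap.add_apply, ContinuousLinearMap.smul_apply, smul_eq_mul]
  have hφv2 : ∀ p : ℝ × ℝ, φ' p (0,1) = (py (py U) p, -(p.2 * py (py U) p)) := by
    intro p
    simp [hφ'def, px, py, ContinuousLinearMap.prod_apply, ContinuousLinearMap.sub_apply,
      ContinuousLinearMap.add_apply, ContinuousLinearMap.smul_apply, smul_eq_mul]
  have hpx : ∀ (g : ℝ × ℝ → ℝ) (p : ℝ × ℝ), fderiv ℝ g p ((1:ℝ),(0:ℝ)) = px g p := fun _ _ => rfl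
  have hpy : ∀ (g : ℝ × ℝ → ℝ) (p : ℝ × ℝ), fderiv ℝ g p ((0:ℝ),(1:ℝ)) = py g p := fun _ _ => rfl
  -- chain rule
  have hchain : ∀ (g : ℝ × ℝ → ℝ), Differentiable ℝ g → ∀ p v,
      fderiv ℝ (fun q => g (φ q)) p v = fderiv ℝ g (φ p) (φ' p v) := by
    intro g hg p v
    have h := ((hg (φ p)).hasFDerivAt.comp p (hφ' p)).fderiv
    calc fderiv ℝ (fun q => g (φ q)) p v = fderiv ℝ (g ∘ φ) p v := rfl
      _ = ((fderiv ℝ g (φ p)).comp (φ' p)) v := by rw [h]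
      _ = fderiv ℝ g (φ p) (φ' p v) := rfl
  -- u ∘ φ = fst
  have hid : (fun q : ℝ × ℝ => u (φ q)) = (fun q : ℝ × ℝ => q.1) := by
    funext q
    exact himpl q.1 q.2
  have hfst : ∀ (p v : ℝ × ℝ), fderiv ℝ u (φ p) (φ' p v) = v.1 := by
    intro p v
    rw [← hchain u hudiff p v, hid]
    rw [show (fun q : ℝ × ℝ => q.1) = Prod.fst from rfl, fderiv_fst]
    rfl
  -- first derivatives of u along φ
  have h1 : ∀ p : ℝ × ℝ, px u (φ p) = p.2 * py u (φ p) := by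
    intro p
    have e := hfst p (0,1)
    rw [hφv2 p, clm_eval] at e
    simp only [hpx, hpy] at e
    have hD := hUYY p
    have h0 : py (py U) p * (px u (φ p) - p.2 * py u (φ p)) = 0 := by
      linear_combination e
    rcases mul_eq_zero.1 h0 with h | h
    · exact absurd h hD
    · linarith
  have h2 : ∀ p : ℝ × ℝ, py u (φ p) * px U p = 1 := by
    intro p
    have e := hfst p (1,0)
    rw [hφv1 p, clm_eval] at e
    simp only [hpx, hpy] at e
    rw [h1 p] at e
    linear_combination e
  -- function-level identities
  have H1 : (fun p : ℝ × ℝ => px u (φ p)) = (fun p : ℝ × ℝ => p.2 * py u (φ p)) := funext h1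
  have H2 : (fun p : ℝ × ℝ => py u (φ p) * px U p) = (fun _ : ℝ × ℝ => (1:ℝ)) := funext h2
  have hpxu_d : Differentiable ℝ (px u) :=
    (contDiff_dapply hu (1,0)).differentiable (by simp)
  have hpyu_d : Differentiable ℝ (py u) :=
    (contDiff_dapply hu (0,1)).differentiable (by simp)
  have hpxU_d : Differentiable ℝ (px U) :=
    (contDiff_dapply hU (1,0)).differentiable (by simp)
  have hsymU : ∀ q : ℝ × ℝ, py (px U) q = px (py U) q := fun q => sym_snd hU q (1,0) (0,1)
  have hsymu : ∀ q : ℝ × ℝ, py (px u) q = px (py u) q := fun q => sym_snd hu q (1,0) (0,1)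
  -- second-order equations at an arbitrary point p
  have key : ∀ p : ℝ × ℝ,
      px (px u) (φ p) * py (py u) (φ p) - px (py u) (φ p) ^ 2
        = py u (φ p) ^ 4 * f p := by
    intro p
    have hg2φ : HasFDerivAt (fun q => py u (φ q)) ((fderiv ℝ (py u) (φ p)).comp (φ' p)) p :=
      (hpyu_d (φ p)).hasFDerivAt.comp p (hφ' p)
    have hg1φ : HasFDerivAt (fun q => px u (φ q)) ((fderiv ℝ (px u) (φ p)).comp (φ' p)) p :=
      (hpxu_d (φ p)).hasFDerivAt.comp p (hφ' p)
    have hprod2 : HasFDerivAt (fun q => py u (φ q) * px U q)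
        (py u (φ p) • fderiv ℝ (px U) p + px U p • ((fderiv ℝ (py u) (φ p)).comp (φ' p))) p :=
      hg2φ.mul (hpxU_d p).hasFDerivAt
    rw [H2] at hprod2
    have hEq2 : (py u (φ p)) • fderiv ℝ (px U) p
        + px U p • ((fderiv ℝ (py u) (φ p)).comp (φ' p)) = 0 :=
      hprod2.unique (hasFDerivAt_const 1 p)
    have hprodY : HasFDerivAt (fun q : ℝ × ℝ => q.2 * py u (φ q))
        (p.2 • ((fderiv ℝ (py u) (φ p)).comp (φ' p))
          + (py u (φ p)) • ContinuousLinearMap.snd ℝ ℝ ℝ) p :=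
      hasFDerivAt_snd.mul hg2φ
    rw [← H1] at hprodY
    have hEq1 : (fderiv ℝ (px u) (φ p)).comp (φ' p)
        = p.2 • ((fderiv ℝ (py u) (φ p)).comp (φ' p))
          + (py u (φ p)) • ContinuousLinearMap.snd ℝ ℝ ℝ :=
      hg1φ.unique hprodY
    -- evaluate
    have e4 := congrArg (fun L : ℝ × ℝ →L[ℝ] ℝ => L ((1:ℝ),(0:ℝ))) hEq2
    have e2 := congrArg (fun L : ℝ × ℝ →L[ℝ] ℝ => L ((0:ℝ),(1:ℝ))) hEq2
    have e1 := congrArg (fun L : ℝ × ℝ →L[ℝ] ℝ => L ((0:ℝ),(1:ℝ))) hEq1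
    simp only [ContinuousLinearMap.add_apply, ContinuousLinearMap.smul_apply,
      ContinuousLinearMap.comp_apply, ContinuousLinearMap.zero_apply,
      ContinuousLinearMap.coe_snd', smul_eq_mul, hφv1, hφv2] at e1 e2 e4
    simp only [hpx, hpy] at e1 e2 e4
    rw [clm_eval (fderiv ℝ (px u) (φ p)), clm_eval (fderiv ℝ (py u) (φ p))] at e1
    rw [clm_eval] at e2 e4
    simp only [hpx, hpy, hsymU, hsymu] at e1 e2 e4
    -- algebra
    have hF : px U p ≠ 0 := hUX p
    have hD : py (py U) p ≠ 0 := hUYY p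
    have huy : py u (φ p) * px U p = 1 := h2 p
    have hlinp : px (px U) p + f p * py (py U) p = 0 := hlin p
    have hA : py (py U) p * px (px u) (φ p) * px U p
        = 2 * p.2 * py (py U) p * px (py u) (φ p) * px U p
          - p.2 ^ 2 * py (py U) p * py (py u) (φ p) * px U p + 1 := by
      linear_combination px U p * e1 + huy
    have hB : py (py U) p * px (py u) (φ p) * px U p ^ 2
        = p.2 * py (py u) (φ p) * py (py U) p * px U p ^ 2 - px (py U) p := by
      linear_combination px U p * e2 - px (py U) p * huy
    have hC : py (py u) (φ p) * py (py U) p * px U p ^ 3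
        = px (py U) p ^ 2 - px (px U) p * py (py U) p := by
      linear_combination py (py U) p * px U p * e4 - py (py U) p * px (px U) p * huy
        - px (py U) p * hB
    have key2 : (px (px u) (φ p) * py (py u) (φ p) - px (py u) (φ p) ^ 2)
        * (py (py U) p ^ 2 * px U p ^ 4) = -(px (px U) p * py (py U) p) := by
      linear_combination (py (py u) (φ p) * py (py U) p * px U p ^ 3) * hA
        + (px (py U) p - py (py U) p * px (py u) (φ p) * px U p ^ 2
            + p.2 * py (py u) (φ p) * py (py U) p * px U p ^ 2) * hB + hC
    have huyF : py u (φ p) = 1 / px U p := by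
      field_simp
      linear_combination huy
    have key3 : ((px (px u) (φ p) * py (py u) (φ p) - px (py u) (φ p) ^ 2) * px U p ^ 4)
        * py (py U) p ^ 2 = f p * py (py U) p ^ 2 := by
      linear_combination key2 - py (py U) p * hlinp
    have key4 : (px (px u) (φ p) * py (py u) (φ p) - px (py u) (φ p) ^ 2) * px U p ^ 4
        = f p := mul_right_cancel₀ (pow_ne_zero 2 hD) key3
    rw [huyF]
    field_simp
    linear_combination key4
  -- conclude
  intro X Y
  have hpt : φ (X, Y) = (py U (X, Y), U (X, Y) - Y * py U (X, Y)) := rfl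
  have k := key (X, Y)
  rw [hpt] at k
  have h1' : px u (py U (X, Y), U (X, Y) - Y * py U (X, Y))
      = Y * py u (py U (X, Y), U (X, Y) - Y * py U (X, Y)) := by
    have h := h1 (X, Y); rw [hpt] at h; exact h
  have h2' : py u (py U (X, Y), U (X, Y) - Y * py U (X, Y)) * px U (X, Y) = 1 := by
    have h := h2 (X, Y); rw [hpt] at h; exact h
  have huy0 : py u (py U (X, Y), U (X, Y) - Y * py U (X, Y)) ≠ 0 :=
    left_ne_zero_of_mul_eq_one h2'
  rw [himpl X Y, h1', mul_div_assoc, div_self huy0, mul_one]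
  exact k
end

section
/- Conversely, if u : ℝ² → ℝ is a smooth solution of u_{xx}u_{yy} - u_{xy}² = u_y⁴·f(u, u_x/u_y) with u_y ≠ 0 and u_{yy} ≠ 0, and U is obtained from u by the inverse of the contact transformation x = U_Y, y = U - Y·U_Y, u = X, then U satisfies the linear PDE U_{XX} + f(X,Y)·U_{YY} = 0. -/
lemma clm_eval_s4 (L : ℝ × ℝ →L[ℝ] ℝ) (w : ℝ × ℝ) :
    L w = w.1 * L (1, 0) + w.2 * L (0, 1) := by
  have hw : w = w.1 • ((1:ℝ), (0:ℝ)) + w.2 • ((0:ℝ), (1:ℝ)) := by ext <;> simp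
  rw [hw, map_add, map_smul, map_smul]; simp [smul_eq_mul]

lemma deriv_eval (F : ℝ × ℝ → ℝ) (hF : ContDiff ℝ (⊤ : ℕ∞) F) (v : ℝ × ℝ) :
    ContDiff ℝ (⊤ : ℕ∞) (fun p => fderiv ℝ F p v) :=
  (hF.fderiv_right (by simp)).clm_apply contDiff_const

lemma px_smooth (F : ℝ × ℝ → ℝ) (hF : ContDiff ℝ (⊤ : ℕ∞) F) : ContDiff ℝ (⊤ : ℕ∞) (px F) :=
  deriv_eval F hF (1,0)

lemma py_smooth (F : ℝ × ℝ → ℝ) (hF : ContDiff ℝ (⊤ : ℕ∞) F) : ContDiff ℝ (⊤ : ℕ∞) (py F) :=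
  deriv_eval F hF (0,1)

lemma deriv_eval_hasFDeriv (F : ℝ × ℝ → ℝ) (hF : ContDiff ℝ (⊤ : ℕ∞) F) (v : ℝ × ℝ) (q : ℝ × ℝ) :
    HasFDerivAt (fun p => fderiv ℝ F p v)
      ((ContinuousLinearMap.apply ℝ ℝ v).comp (fderiv ℝ (fderiv ℝ F) q)) q := by
  have h2 : HasFDerivAt (fderiv ℝ F) (fderiv ℝ (fderiv ℝ F) q) q :=
    (((hF.fderiv_right (m := (⊤ : ℕ∞)) (by simp)).differentiable (by simp)) q).hasFDerivAt
  exact (ContinuousLinearMap.apply ℝ ℝ v).hasFDerivAt.comp q h2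

lemma clairaut (F : ℝ × ℝ → ℝ) (hF : ContDiff ℝ (⊤ : ℕ∞) F) (q : ℝ × ℝ) :
    px (py F) q = py (px F) q := by
  have hsym : ∀ v w, fderiv ℝ (fderiv ℝ F) q v w = fderiv ℝ (fderiv ℝ F) q w v := by
    apply second_derivative_symmetric
      (f' := fderiv ℝ F) (fun y => ((hF.differentiable (by simp)) y).hasFDerivAt)
    exact (((hF.fderiv_right (m := (⊤ : ℕ∞)) (by simp)).differentiable (by simp)) q).hasFDerivAt
  have h1 := (deriv_eval_hasFDeriv F hF (0,1) q).fderiv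
  have h2 := (deriv_eval_hasFDeriv F hF (1,0) q).fderiv
  show fderiv ℝ (py F) q (1,0) = fderiv ℝ (px F) q (0,1)
  unfold py px
  rw [h1, h2]
  simpa using hsym (1,0) (0,1)

/-- conversely, if u solves u_{xx}u_{yy} - u_{xy}² = u_y⁴·f(u, u_x/u_y)
    with u_y ≠ 0, u_{yy} ≠ 0, and U is the image of u under the inverse contact
    transformation (X = u, Y = u_x/u_y, U_Y = x, U - Y·U_Y = y), then U solves
    U_{XX} + f(X,Y)·U_{YY} = 0. -/
theorem stmt4 (f : ℝ × ℝ → ℝ) (u U : ℝ × ℝ → ℝ)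
    (hu : ContDiff ℝ (⊤ : ℕ∞) u) (hU : ContDiff ℝ (⊤ : ℕ∞) U)
    (huy : ∀ p : ℝ × ℝ, py u p ≠ 0) (huyy : ∀ p : ℝ × ℝ, py (py u) p ≠ 0)
    (hMA : ∀ p : ℝ × ℝ,
      px (px u) p * py (py u) p - px (py u) p ^ 2 =
        py u p ^ 4 * f (u p, px u p / py u p))
    (hinv : ∀ p : ℝ × ℝ,
      py U (u p, px u p / py u p) = p.1 ∧
      U (u p, px u p / py u p) - (px u p / py u p) * py U (u p, px u p / py u p) = p.2) :
    ∀ p : ℝ × ℝ,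
      px (px U) (u p, px u p / py u p) +
        f (u p, px u p / py u p) * py (py U) (u p, px u p / py u p) = 0 := by
  set Y : ℝ × ℝ → ℝ := fun p => px u p / py u p with hYdef
  set g : ℝ × ℝ → ℝ × ℝ := fun p => (u p, Y p) with hgdef
  have hux : ContDiff ℝ (⊤ : ℕ∞) (px u) := px_smooth u hu
  have huys : ContDiff ℝ (⊤ : ℕ∞) (py u) := py_smooth u hu
  have hYc : ContDiff ℝ (⊤ : ℕ∞) Y := hux.div huys huy
  have hgc : ContDiff ℝ (⊤ : ℕ∞) g := hu.prodMk hYc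
  -- derivative of Y
  have hdY : ∀ p v, fderiv ℝ Y p v =
      (1 / py u p ^ 2) * (py u p * fderiv ℝ (px u) p v - px u p * fderiv ℝ (py u) p v) := by
    intro p v
    have hinvd : HasFDerivAt (fun p => (py u p)⁻¹)
        ((-(py u p ^ 2)⁻¹) • fderiv ℝ (py u) p) p :=
      (hasDerivAt_inv (huy p)).comp_hasFDerivAt p ((huys.differentiable (by simp)) p).hasFDerivAt
    have hmul : HasFDerivAt (fun p => px u p * (py u p)⁻¹)
        (px u p • ((-(py u p ^ 2)⁻¹) • fderiv ℝ (py u) p) +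
          (py u p)⁻¹ • fderiv ℝ (px u) p) p :=
      ((hux.differentiable (by simp)) p).hasFDerivAt.mul hinvd
    have hYeq : Y = fun p => px u p * (py u p)⁻¹ := by
      funext p; rw [hYdef]; ring
    rw [hYeq, hmul.fderiv]
    have hy := huy p
    simp [smul_eq_mul]
    field_simp
    ring
  -- chain rule
  have hchain : ∀ (F : ℝ × ℝ → ℝ), ContDiff ℝ (⊤ : ℕ∞) F → ∀ p v,
      fderiv ℝ (fun p => F (g p)) p v =
        px F (g p) * fderiv ℝ u p v + py F (g p) * fderiv ℝ Y p v := by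
    intro F hF p v
    have hgd : HasFDerivAt g ((fderiv ℝ u p).prod (fderiv ℝ Y p)) p :=
      (((hu.differentiable (by simp)) p).hasFDerivAt.prodMk
        ((hYc.differentiable (by simp)) p).hasFDerivAt)
    have hFd : HasFDerivAt F (fderiv ℝ F (g p)) (g p) :=
      ((hF.differentiable (by simp)) (g p)).hasFDerivAt
    have hcomp := (hFd.comp p hgd).fderiv
    show fderiv ℝ (F ∘ g) p v = _
    rw [hcomp]
    have : ((fderiv ℝ u p).prod (fderiv ℝ Y p)) v = (fderiv ℝ u p v, fderiv ℝ Y p v) := rfl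
    simp only [ContinuousLinearMap.coe_comp', Function.comp_apply, this]
    rw [clm_eval_s4 (fderiv ℝ F (g p)) (fderiv ℝ u p v, fderiv ℝ Y p v)]
    simp only [px, py]
    ring
  -- E1 / E2 system for py U
  have hE1 : ∀ p (v : ℝ × ℝ),
      px (py U) (g p) * fderiv ℝ u p v + py (py U) (g p) * fderiv ℝ Y p v = v.1 := by
    intro p v
    rw [← hchain (py U) (py_smooth U hU) p v]
    have heq : (fun p => py U (g p)) = Prod.fst := funext fun p => (hinv p).1
    rw [heq]
    rw [hasFDerivAt_fst.fderiv]
    rfl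
  -- U ∘ g identity
  have hE2 : ∀ p (v : ℝ × ℝ),
      px U (g p) * fderiv ℝ u p v + py U (g p) * fderiv ℝ Y p v =
        v.2 + (fderiv ℝ Y p v * p.1 + Y p * v.1) := by
    intro p v
    rw [← hchain U hU p v]
    have heq : (fun p => U (g p)) = fun p => p.2 + Y p * p.1 := by
      funext p
      have h1 := (hinv p).1
      have h2 := (hinv p).2
      show U (u p, px u p / py u p) = p.2 + px u p / py u p * p.1
      rw [h1] at h2
      linarith
    rw [heq]
    have hd : HasFDerivAt (fun p : ℝ × ℝ => p.2 + Y p * p.1)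
        ((ContinuousLinearMap.snd ℝ ℝ ℝ) +
          (Y p • (ContinuousLinearMap.fst ℝ ℝ ℝ) + p.1 • fderiv ℝ Y p)) p := by
      exact (hasFDerivAt_snd.add
        (((hYc.differentiable (by simp)) p).hasFDerivAt.mul hasFDerivAt_fst))
    rw [hd.fderiv]
    simp [smul_eq_mul]
    ring
  -- px U (g p) = 1 / py u p
  have hUX : ∀ p, px U (g p) = (py u p)⁻¹ := by
    intro p
    have h := hE2 p (0,1)
    have h1 : py U (g p) = p.1 := (hinv p).1
    have hdu : fderiv ℝ u p ((0:ℝ),(1:ℝ)) = py u p := rfl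
    rw [hdu, h1] at h
    norm_num at h
    have hy := huy p
    field_simp
    linear_combination h
  -- E3 / E4 system for px U
  have hE34 : ∀ p (v : ℝ × ℝ),
      px (px U) (g p) * fderiv ℝ u p v + py (px U) (g p) * fderiv ℝ Y p v =
        -(fderiv ℝ (py u) p v) / py u p ^ 2 := by
    intro p v
    rw [← hchain (px U) (px_smooth U hU) p v]
    have heq : (fun p => px U (g p)) = fun p => (py u p)⁻¹ := funext hUX
    rw [heq]
    have hd : HasFDerivAt (fun p => (py u p)⁻¹)
        ((-(py u p ^ 2)⁻¹) • fderiv ℝ (py u) p) p :=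
      (hasDerivAt_inv (huy p)).comp_hasFDerivAt p ((huys.differentiable (by simp)) p).hasFDerivAt
    rw [hd.fderiv]
    simp [smul_eq_mul]
    ring
  -- final algebra
  intro p
  have hq : (u p, px u p / py u p) = g p := rfl
  rw [hq]
  have hy := huy p
  have hdu1 : fderiv ℝ u p ((1:ℝ),(0:ℝ)) = px u p := rfl
  have hdu2 : fderiv ℝ u p ((0:ℝ),(1:ℝ)) = py u p := rfl
  have hdpx1 : fderiv ℝ (px u) p ((1:ℝ),(0:ℝ)) = px (px u) p := rfl
  have hdpx2 : fderiv ℝ (px u) p ((0:ℝ),(1:ℝ)) = px (py u) p := (clairaut u hu p).symm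
  have hdpy1 : fderiv ℝ (py u) p ((1:ℝ),(0:ℝ)) = px (py u) p := rfl
  have hdpy2 : fderiv ℝ (py u) p ((0:ℝ),(1:ℝ)) = py (py u) p := rfl
  have hS : py (px U) (g p) = px (py U) (g p) := (clairaut U hU (g p)).symm
  have e1 := hE1 p (1,0)
  have e2 := hE1 p (0,1)
  have e3 := hE34 p (1,0)
  have e4 := hE34 p (0,1)
  rw [hdY, hdu1, hdpx1, hdpy1] at e1 e3
  rw [hdY, hdu2, hdpx2, hdpy2] at e2 e4
  rw [hS] at e3 e4
  have ema := hMA p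
  rw [hq] at ema
  norm_num at e1 e2 e3 e4
  field_simp at e1 e2 e3 e4
  have h6 : (px (px U) (g p) + f (g p) * py (py U) (g p)) * py u p ^ 6 = 0 := by
    linear_combination py u p ^ 3 * e4 - px (py u) p * py u p * e2 -
      py (py U) (g p) * py u p ^ 2 * ema + py (py u) p * py u p * e1
  rcases mul_eq_zero.mp h6 with h | h
  · exact h
  · exact absurd (pow_eq_zero_iff (by norm_num)|>.mp h) hy
end
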